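/- arXiv:1408.2081 — 3 statements merged into one kernel-verified Lean document; each statement's English description precedes it below -/
import Mathlib

section
/- An infinite structure C consisting of a strict (irreflexive) total order E is not ptp-conservative: for every coloring C̄ of C and every n, there exists an element e of C such that M_n(C̄) satisfies E(q_n(e), q_n(e)), so the positive 1-type of e (over the order signature) is not preserved by q_n. -/
namespace BDDFC

/-- A (binary) relational signature: binary relation symbols, unary relation
symbols (used also for colors), and constants. -/
structure Sig where
  Rel : Type
  Un : Type
  Const : Type

/-- A relational structure over a signature. -/
structure Str (σ : Sig) where
  Dom : Type
  rel : σ.Rel → Dom → Dom → Prop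
  un : σ.Un → Dom → Prop
  const : σ.Const → Dom

/-- Terms of a conjunctive query `Ψ(x̄, y)` with `k` existential variables:
an existential variable, the distinguished free variable `y`, or a constant. -/
inductive Tm (σ : Sig) (k : ℕ) where
  | var : Fin k → Tm σ k
  | y : Tm σ k
  | const : σ.Const → Tm σ k

/-- Atoms of conjunctive queries: binary relation atoms, unary atoms,
and equalities (in particular equalities with constants). -/
inductive Atom (σ : Sig) (k : ℕ) where
  | rel : σ.Rel → Tm σ k → Tm σ k → Atom σ k
  | un : σ.Un → Tm σ k → Atom σ k
  | eq : Tm σ k → Tm σ k → Atom σ k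

/-- A conjunctive query `Ψ(x̄, y)` with `|x̄| = k`, as a finite conjunction of atoms. -/
abbrev CQ (σ : Sig) (k : ℕ) := List (Atom σ k)

variable {σ : Sig}

def tmVal (A : Str σ) {k : ℕ} (v : Fin k → A.Dom) (e : A.Dom) : Tm σ k → A.Dom
  | .var i => v i
  | .y => e
  | .const c => A.const c

def satAtom (A : Str σ) {k : ℕ} (v : Fin k → A.Dom) (e : A.Dom) : Atom σ k → Prop
  | .rel R s t => A.rel R (tmVal A v e s) (tmVal A v e t)
  | .un U s => A.un U (tmVal A v e s)
  | .eq s t => tmVal A v e s = tmVal A v e t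

/-- `A ⊨ Ψ(v(x̄), e)`. -/
def sat (A : Str σ) {k : ℕ} (v : Fin k → A.Dom) (e : A.Dom) (q : CQ σ k) : Prop :=
  ∀ a ∈ q, satAtom A v e a

/-- `Ψ(x̄,y) ∈ ptp_n(A, e, σ)` : a query with `|x̄| < n` satisfied at `e`. -/
def inPtp (A : Str σ) (n : ℕ) (e : A.Dom) {k : ℕ} (q : CQ σ k) : Prop :=
  k < n ∧ ∃ v, sat A v e q

/-- The positive `n`-type of `e` in `A`, as a set of conjunctive queries. -/
def ptypeSet (A : Str σ) (n : ℕ) (e : A.Dom) : Set (Σ k : ℕ, CQ σ k) :=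
  {p | p.1 < n ∧ ∃ v, sat A v e p.2}

/-- `d ≡_n e` : equality of positive `n`-types. -/
def equivPtp (A : Str σ) (n : ℕ) (d e : A.Dom) : Prop :=
  ∀ k, k < n → ∀ q : CQ σ k, (∃ v, sat A v d q) ↔ (∃ v, sat A v e q)

def ptpSetoid (A : Str σ) (n : ℕ) : Setoid A.Dom where
  r := equivPtp A n
  iseqv := ⟨fun _ _ _ _ => Iff.rfl, fun h k hk q => (h k hk q).symm,
            fun h h' k hk q => (h k hk q).trans (h' k hk q)⟩

/-- The quotient structure `M_n(A)`, with relations the projections of the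
relations of `A` (the minimal ones making the quotient map a homomorphism). -/
def Mq (A : Str σ) (n : ℕ) : Str σ where
  Dom := Quotient (ptpSetoid A n)
  rel R x y := ∃ a b, Quotient.mk (ptpSetoid A n) a = x ∧
    Quotient.mk (ptpSetoid A n) b = y ∧ A.rel R a b
  un U x := ∃ a, Quotient.mk (ptpSetoid A n) a = x ∧ A.un U a
  const c := Quotient.mk (ptpSetoid A n) (A.const c)

/-- The quotient map `q_n : A → M_n(A)`. -/
def qmap (A : Str σ) (n : ℕ) (a : A.Dom) : (Mq A n).Dom :=
  Quotient.mk (ptpSetoid A n) a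

def IsHom (A B : Str σ) (f : A.Dom → B.Dom) : Prop :=
  (∀ R a b, A.rel R a b → B.rel R (f a) (f b)) ∧
  (∀ U a, A.un U a → B.un U (f a)) ∧
  (∀ c, f (A.const c) = B.const c)

/-- An element is non-constant if it is not the interpretation of a constant. -/
def NonConst (A : Str σ) (a : A.Dom) : Prop := ∀ c, A.const c ≠ a

/-- The signature extended by a set `K` of colors (fresh unary predicates). -/
def colorSig (σ : Sig) (K : Type) : Sig := ⟨σ.Rel, σ.Un ⊕ K, σ.Const⟩

/-- The coloring of `C` determined by a color assignment `col`; each element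
satisfies exactly one color. -/
def colored (C : Str σ) {K : Type} (col : C.Dom → K) : Str (colorSig σ K) where
  Dom := C.Dom
  rel := C.rel
  un := fun u a => match u with
    | Sum.inl u' => C.un u' a
    | Sum.inr kk => col a = kk
  const := C.const

/-- The reduct of a colored structure back to the base signature. -/
def reduct {K : Type} (A : Str (colorSig σ K)) : Str σ where
  Dom := A.Dom
  rel := A.rel
  un := fun u a => A.un (Sum.inl u) a
  const := A.const

/-- The coloring `col` of `C` is `n`-conservative up to size `m`: positive
`m`-types over the base signature are preserved by the quotient map `q_n`. -/
def conservative (C : Str σ) {K : Type} (col : C.Dom → K) (n m : ℕ) : Prop :=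
  ∀ e : C.Dom, ∀ k, k < m → ∀ q : CQ σ k,
    (∃ v, sat C v e q) ↔
    (∃ v, sat (reduct (Mq (colored C col) n)) v (qmap (colored C col) n e) q)

/-- One step of the edge relation of a binary structure. -/
def edge (A : Str σ) (a b : A.Dom) : Prop := ∃ R, A.rel R a b

/-- Directed paths of a given length. -/
def chain (A : Str σ) : ℕ → A.Dom → A.Dom → Prop
  | 0, a, b => a = b
  | ℓ + 1, a, b => ∃ c, edge A a c ∧ chain A ℓ c b

end BDDFC

open BDDFC

/-- The signature of a single binary relation (the order). -/
def orderSig : Sig := ⟨Unit, Empty, Empty⟩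

/-!
Over a finite signature a positive `n`-type is determined by which finite sets of atoms in
fewer than `n` variables are satisfiable at the element, so `≡_n` has finite index. An
infinite order therefore has two distinct elements `a < b` with `q_n a = q_n b`, and the
edge `a < b` projects to a loop at `q_n a`.
-/

theorem Setoid.finite_quotient_of_map_eq {α β : Type*} [Finite β] (s : Setoid α)
    (f : α → β) (hf : ∀ a b, f a = f b → s a b) : Finite (Quotient s) :=
  Finite.of_surjective (fun p : Set.range f => Quotient.mk s p.2.choose) <| by
    rintro ⟨a⟩
    have hfa : ∃ b, f b = f a := ⟨a, rfl⟩
    exact ⟨⟨f a, hfa⟩, Quotient.sound (hf _ _ hfa.choose_spec)⟩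

namespace BDDFC

variable {σ : Sig}

instance Tm.finite [Finite σ.Const] (k : ℕ) : Finite (Tm σ k) :=
  Finite.of_surjective (Sum.elim Tm.var (Sum.elim (fun _ : Unit => Tm.y) Tm.const)) <| by
    rintro (i | _ | c)
    exacts [⟨.inl i, rfl⟩, ⟨.inr (.inl ()), rfl⟩, ⟨.inr (.inr c), rfl⟩]

instance Atom.finite [Finite σ.Rel] [Finite σ.Un] [Finite σ.Const] (k : ℕ) :
    Finite (Atom σ k) :=
  Finite.of_surjective
    (Sum.elim (fun p : σ.Rel × Tm σ k × Tm σ k => Atom.rel p.1 p.2.1 p.2.2)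
      (Sum.elim (fun p : σ.Un × Tm σ k => Atom.un p.1 p.2)
        (fun p : Tm σ k × Tm σ k => Atom.eq p.1 p.2))) <| by
    rintro (⟨R, s, t⟩ | ⟨U, s⟩ | ⟨s, t⟩)
    exacts [⟨.inl (R, s, t), rfl⟩, ⟨.inr (.inl (U, s)), rfl⟩, ⟨.inr (.inr (s, t)), rfl⟩]

def satisfiableAtomSets (A : Str σ) (n : ℕ) (e : A.Dom) (k : Fin n) (S : Set (Atom σ k)) :
    Prop :=
  ∃ v : Fin k → A.Dom, ∀ a ∈ S, satAtom A v e a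

theorem equivPtp_of_satisfiableAtomSets_eq (A : Str σ) (n : ℕ) {d e : A.Dom}
    (h : satisfiableAtomSets A n d = satisfiableAtomSets A n e) : equivPtp A n d e :=
  fun k hk q => Iff.of_eq (congrFun (congrFun h ⟨k, hk⟩) {a | a ∈ q})

instance Mq.finite_dom [Finite σ.Rel] [Finite σ.Un] [Finite σ.Const] (A : Str σ) (n : ℕ) :
    Finite (Mq A n).Dom :=
  Setoid.finite_quotient_of_map_eq (ptpSetoid A n) (satisfiableAtomSets A n)
    fun _ _ => equivPtp_of_satisfiableAtomSets_eq A n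

theorem Mq_rel_qmap_of_rel {A : Str σ} {n : ℕ} {R : σ.Rel} {a b : A.Dom} (hab : A.rel R a b)
    (hq : qmap A n a = qmap A n b) : (Mq A n).rel R (qmap A n a) (qmap A n a) :=
  ⟨a, b, rfl, hq.symm, hab⟩

end BDDFC

theorem stmt_8_general (C : Str orderSig) [Infinite C.Dom]
    (hirr : ∀ a : C.Dom, ¬ C.rel () a a)
    (htotal : ∀ a b : C.Dom, a ≠ b → C.rel () a b ∨ C.rel () b a)
    (K : Type) [Finite K] (col : C.Dom → K) (n : ℕ) :
    ∃ e : C.Dom,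
      (Mq (colored C col) n).rel () (qmap (colored C col) n e)
        (qmap (colored C col) n e) ∧
      ¬ C.rel () e e := by
  have : Finite (colorSig orderSig K).Rel := inferInstanceAs (Finite Unit)
  have : Finite (colorSig orderSig K).Un := inferInstanceAs (Finite (Empty ⊕ K))
  have : Finite (colorSig orderSig K).Const := inferInstanceAs (Finite Empty)
  have : Infinite (colored C col).Dom := inferInstanceAs (Infinite C.Dom)
  obtain ⟨a, b, hne, hq⟩ := Finite.exists_ne_map_eq_of_infinite (qmap (colored C col) n)
  rcases htotal a b hne with hab | hba
  · exact ⟨a, Mq_rel_qmap_of_rel hab hq, hirr a⟩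
  · exact ⟨b, Mq_rel_qmap_of_rel hba hq.symm, hirr b⟩

/-- an infinite strict (irreflexive) total order is not
ptp-conservative: for every coloring and every `n` some element `e` gets a
self-loop `E(q_n(e), q_n(e))` in the quotient `M_n(C̄)`, so the positive 1-type
of `e` is not preserved by `q_n`. -/
theorem stmt_8 (C : Str orderSig) [Infinite C.Dom]
    (hirr : ∀ a : C.Dom, ¬ C.rel () a a)
    (htrans : ∀ a b c : C.Dom, C.rel () a b → C.rel () b c → C.rel () a c)
    (htotal : ∀ a b : C.Dom, a ≠ b → C.rel () a b ∨ C.rel () b a)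
    (K : Type) [Finite K] (col : C.Dom → K) (n : ℕ) :
    ∃ e : C.Dom,
      (Mq (colored C col) n).rel () (qmap (colored C col) n e)
        (qmap (colored C col) n e) ∧
      ¬ C.rel () e e :=
  stmt_8_general C hirr htotal K col n
end

section
/- Let C̄ be a natural coloring of a VTDAG C (so that any directed path of length ≤ m joins elements of distinct color hues). Let n ≥ m. Then M_n(C̄) contains no directed cycle R_1(x_1,x_2), R_2(x_2,x_3), …, R_k(x_k,x_1) of length k < m; i.e., no conjunctive query containing such a directed cycle is satisfied in M_n(C̄). -/
namespace BDDFC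

variable {σ : Sig}

/-! A directed cycle of length `k < m` in `M_n(C)` lifts edge by edge to `C`, the target of
each lifted edge having the same positive `n`-type as the source of the next one. The query
"there is a directed path of length `i + 1` into `y` starting at an element of colour `u`" is
therefore carried around the cycle as long as it has fewer than `n` variables. Back at the
start of the cycle it yields a path of length `k ≤ m` between two elements of colour `u`, which
contradicts the distinct hues of a natural coloring. -/

def liftTm {j : ℕ} : Tm σ j → Tm σ (j + 1)
  | .var i => .var i.castSucc
  | .y => .var (Fin.last j)
  | .const c => .const c

def liftAtom {j : ℕ} : Atom σ j → Atom σ (j + 1)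
  | .rel R s t => .rel R (liftTm s) (liftTm t)
  | .un U s => .un U (liftTm s)
  | .eq s t => .eq (liftTm s) (liftTm t)

theorem tmVal_liftTm (A : Str σ) {j : ℕ} (v : Fin (j + 1) → A.Dom) (e : A.Dom) (t : Tm σ j) :
    tmVal A v e (liftTm t) = tmVal A (v ∘ Fin.castSucc) (v (Fin.last j)) t := by
  cases t <;> rfl

theorem satAtom_liftAtom (A : Str σ) {j : ℕ} (v : Fin (j + 1) → A.Dom) (e : A.Dom)
    (α : Atom σ j) :
    satAtom A v e (liftAtom α) ↔ satAtom A (v ∘ Fin.castSucc) (v (Fin.last j)) α := by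
  cases α <;> simp only [satAtom, liftAtom, tmVal_liftTm]

theorem sat_map_liftAtom (A : Str σ) {j : ℕ} (v : Fin (j + 1) → A.Dom) (e : A.Dom)
    (q : CQ σ j) :
    sat A v e (q.map liftAtom) ↔ sat A (v ∘ Fin.castSucc) (v (Fin.last j)) q := by
  simp only [sat, List.forall_mem_map, satAtom_liftAtom]

theorem sat_cons (A : Str σ) {k : ℕ} (v : Fin k → A.Dom) (e : A.Dom) (α : Atom σ k)
    (q : CQ σ k) : sat A v e (α :: q) ↔ satAtom A v e α ∧ sat A v e q :=
  List.forall_mem_cons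

theorem chain_snoc (A : Str σ) {ℓ : ℕ} {a b c : A.Dom} (hab : chain A ℓ a b)
    (hbc : edge A b c) : chain A (ℓ + 1) a c := by
  induction ℓ generalizing a with
  | zero => cases hab; exact ⟨c, hbc, rfl⟩
  | succ ℓ ih =>
    obtain ⟨d, had, hdb⟩ := hab
    exact ⟨d, had, ih hdb⟩

/-- `pathQuery R u i` has variables `x_0, …, x_i` and says `U_u(x_0)` and
`R 0 (x_0, x_1), …, R (i - 1) (x_(i-1), x_i), R i (x_i, y)`. -/
def pathQuery (R : ℕ → σ.Rel) (u : σ.Un) : (i : ℕ) → CQ σ (i + 1)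
  | 0 => [.un u (.var 0), .rel (R 0) (.var 0) .y]
  | i + 1 => .rel (R (i + 1)) (.var (Fin.last (i + 1))) .y :: (pathQuery R u i).map liftAtom

section pathQuery

variable {A : Str σ} {R : ℕ → σ.Rel} {u : σ.Un}

theorem sat_pathQuery_zero {x e : A.Dom} (hx : A.un u x) (hxe : A.rel (R 0) x e) :
    sat A (fun _ => x) e (pathQuery R u 0) := by
  simp only [pathQuery, sat_cons]
  exact ⟨hx, hxe, List.forall_mem_nil _⟩

theorem sat_pathQuery_succ {i : ℕ} {v : Fin (i + 1) → A.Dom} {x e : A.Dom}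
    (hv : sat A v x (pathQuery R u i)) (hxe : A.rel (R (i + 1)) x e) :
    sat A (Fin.snoc v x) e (pathQuery R u (i + 1)) := by
  rw [pathQuery, sat_cons, sat_map_liftAtom, Fin.snoc_comp_castSucc, Fin.snoc_last]
  refine ⟨?_, hv⟩
  simpa only [satAtom, tmVal, Fin.snoc_last] using hxe

theorem chain_of_sat_pathQuery {i : ℕ} {v : Fin (i + 1) → A.Dom} {e : A.Dom}
    (hv : sat A v e (pathQuery R u i)) : chain A (i + 1) (v 0) e ∧ A.un u (v 0) := by
  induction i generalizing e with
  | zero =>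
    rw [pathQuery, sat_cons, sat_cons] at hv
    obtain ⟨hu, hR, -⟩ := hv
    exact ⟨⟨e, ⟨R 0, hR⟩, rfl⟩, hu⟩
  | succ i ih =>
    rw [pathQuery, sat_cons, sat_map_liftAtom] at hv
    obtain ⟨hR, hpath⟩ := hv
    obtain ⟨hchain, hu⟩ := ih hpath
    exact ⟨chain_snoc A hchain ⟨R (i + 1), hR⟩, hu⟩

end pathQuery

theorem exists_sat_pathQuery_of_walk (C : Str σ) (n : ℕ) (R : ℕ → σ.Rel) {u : σ.Un}
    (a b : ℕ → C.Dom) (hrel : ∀ i, C.rel (R i) (a i) (b i))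
    (hequiv : ∀ i, equivPtp C n (b i) (a (i + 1))) (hu : C.un u (a 0)) :
    ∀ i, i + 1 < n → ∃ v, sat C v (a (i + 1)) (pathQuery R u i) := by
  intro i hi
  induction i with
  | zero => exact (hequiv 0 1 hi _).mp ⟨_, sat_pathQuery_zero hu (hrel 0)⟩
  | succ i ih =>
    obtain ⟨v, hv⟩ := ih (by omega)
    exact (hequiv (i + 1) (i + 2) hi _).mp ⟨_, sat_pathQuery_succ hv (hrel (i + 1))⟩

theorem exists_walk_of_cycle (C : Str σ) (n : ℕ) {k : ℕ} (hk0 : 0 < k)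
    (f : Fin k → (Mq C n).Dom) (Rs : Fin k → σ.Rel)
    (hcyc : ∀ i : Fin k, (Mq C n).rel (Rs i) (f i) (f ⟨(i.1 + 1) % k, Nat.mod_lt _ hk0⟩)) :
    ∃ (R : ℕ → σ.Rel) (a b : ℕ → C.Dom), (∀ i, C.rel (R i) (a i) (b i)) ∧
      (∀ i, equivPtp C n (b i) (a (i + 1))) ∧ a k = a 0 := by
  choose a b ha hb hab using hcyc
  let idx (i : ℕ) : Fin k := ⟨i % k, Nat.mod_lt _ hk0⟩
  refine ⟨fun i => Rs (idx i), fun i => a (idx i), fun i => b (idx i), fun i => hab (idx i),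
    fun i => ?_, congrArg a (Fin.ext (by simp [idx]))⟩
  have hnext : (⟨(i % k + 1) % k, Nat.mod_lt _ hk0⟩ : Fin k) = idx (i + 1) :=
    Fin.ext (Nat.mod_add_mod i k 1)
  exact Quotient.exact ((hb (idx i)).trans ((congrArg f hnext).trans (ha (idx (i + 1))).symm))

end BDDFC

open BDDFC

theorem stmt_13_general {σ : Sig} (C : Str σ) (m n : ℕ) (hmn : m ≤ n)
    -- the unary predicates are the colors of a natural coloring, with hues `hue`:
    (H : Type) (hue : σ.Un → H)
    (hone : ∀ a : C.Dom, ∃! u : σ.Un, C.un u a)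
    (hhue : ∀ ℓ, 1 ≤ ℓ → ℓ ≤ m → ∀ a b : C.Dom, chain C ℓ a b →
      ∀ u u' : σ.Un, C.un u a → C.un u' b → hue u ≠ hue u')
    (k : ℕ) (hk0 : 0 < k) (hkm : k < m) :
    ¬ ∃ (f : Fin k → (Mq C n).Dom) (Rs : Fin k → σ.Rel),
        ∀ i : Fin k, (Mq C n).rel (Rs i) (f i) (f ⟨(i.1 + 1) % k, Nat.mod_lt _ hk0⟩) := by
  rintro ⟨f, Rs, hcyc⟩
  obtain ⟨R, a, b, hrel, hequiv, hperiod⟩ := exists_walk_of_cycle C n hk0 f Rs hcyc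
  obtain ⟨u, hu, -⟩ := hone (a 0)
  obtain ⟨j, rfl⟩ : ∃ j, k = j + 1 := ⟨k - 1, by omega⟩
  obtain ⟨v, hv⟩ := exists_sat_pathQuery_of_walk C n R a b hrel hequiv hu j (by omega)
  obtain ⟨hpath, hv0⟩ := chain_of_sat_pathQuery hv
  exact hhue (j + 1) le_add_self hkm.le (v 0) (a (j + 1)) hpath u u hv0 (hperiod ▸ hu) rfl

/-- if `C̄` is a natural coloring of a VTDAG (so any directed path
of length between 1 and `m` joins elements of distinct color hues) and `n ≥ m`,
then `M_n(C̄)` contains no directed cycle `R_1(x_1,x_2), …, R_k(x_k,x_1)` of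
length `k < m`. -/
theorem stmt_13 {σ : Sig} (C : Str σ) (m n : ℕ) (hmn : m ≤ n)
    -- C is a VTDAG:
    (hdag : ∀ a : C.Dom, NonConst C a →
      ¬ Relation.TransGen (fun x y => NonConst C x ∧ NonConst C y ∧ edge C x y) a a)
    (huniq : ∀ (R : σ.Rel) (e d d' : C.Dom), NonConst C e → NonConst C d →
      NonConst C d' → C.rel R d e → C.rel R d' e → d = d')
    (hclique : ∀ e d d' : C.Dom, NonConst C e → NonConst C d → NonConst C d' →
      edge C d e → edge C d' e → d = d' ∨ edge C d d' ∨ edge C d' d)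
    -- the unary predicates are the colors of a natural coloring, with hues `hue`:
    (H : Type) (hue : σ.Un → H)
    (hone : ∀ a : C.Dom, ∃! u : σ.Un, C.un u a)
    (hhue : ∀ ℓ, 1 ≤ ℓ → ℓ ≤ m → ∀ a b : C.Dom, chain C ℓ a b →
      ∀ u u' : σ.Un, C.un u a → C.un u' b → hue u ≠ hue u')
    (k : ℕ) (hk0 : 0 < k) (hkm : k < m) :
    ¬ ∃ (f : Fin k → (Mq C n).Dom) (Rs : Fin k → σ.Rel),
        ∀ i : Fin k, (Mq C n).rel (Rs i) (f i) (f ⟨(i.1 + 1) % k, Nat.mod_lt _ hk0⟩) :=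
  stmt_13_general C m n hmn H hue hone hhue k hk0 hkm
end

section
/- Every binary structure of bounded degree is ptp-conservative: for each m there exist n and a coloring C̄ such that the positive m-types over the base signature of all elements are preserved by the quotient map q_n : C̄ → M_n(C̄). -/
/-!
Colour `C` so that distinct elements at Gaifman distance at most `2L + 1` get distinct colours,
where `L` bounds the number of terms of the queries considered; bounded degree makes these balls
uniformly finite, so finitely many colours suffice, assigned greedily along a well-order.
The quotient map is a homomorphism, so types can only grow along it. Conversely, since the
neighbours of an element are told apart by their colours, `a ≡_{s+2} a'` and an edge `a' → b'`
give an edge `a → b` with `b ≡_{s+1} b'`. A solution of a query in `M_n(C̄)` is thus lifted to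
`C` along walks in the query's own Gaifman graph, from `e` in the component of `y` and from any
representative elsewhere. Lifts stay within `L` steps of their base point, so the colours force
them to agree wherever the query asks for an equality or an edge.
-/

namespace SimpleGraph

variable {V : Type*} {G : SimpleGraph V}

def IsDistanceColoring (G : SimpleGraph V) {K : Type*} (r : ℕ) (col : V → K) : Prop :=
  ∀ ⦃x y⦄, G.edist x y ≤ r → col x = col y → x = y

theorem IsDistanceColoring.mono {K : Type*} {col : V → K} {r r' : ℕ} (h : r ≤ r')
    (hcol : G.IsDistanceColoring r' col) : G.IsDistanceColoring r col :=
  fun _ _ hxy => hcol (hxy.trans (by exact_mod_cast h))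

theorem IsDistanceColoring.subsingleton {K : Type*} {col : V → K}
    (hcol : G.IsDistanceColoring 2 col) {a : V} {κ : K} {s : Set V}
    (hs : ∀ b ∈ s, G.edist a b ≤ 1 ∧ col b = κ) : s.Subsingleton := by
  intro b₁ hb₁ b₂ hb₂
  refine hcol ?_ ((hs b₁ hb₁).2.trans (hs b₂ hb₂).2.symm)
  calc G.edist b₁ b₂ ≤ G.edist b₁ a + G.edist a b₂ := G.edist_triangle
    _ ≤ 1 + 1 := by rw [edist_comm]; exact add_le_add (hs b₁ hb₁).1 (hs b₂ hb₂).1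

theorem edist_le_add_of_le {x y z : V} {a b : ℕ} (h₁ : G.edist x y ≤ a)
    (h₂ : G.edist y z ≤ b) : G.edist x z ≤ ↑(a + b) := by
  push_cast
  exact G.edist_triangle.trans (add_le_add h₁ h₂)

theorem eq_or_exists_adj_of_edist_le_succ {x y : V} {r : ℕ} (h : G.edist x y ≤ ↑(r + 1)) :
    x = y ∨ ∃ z, G.Adj x z ∧ G.edist z y ≤ r := by
  obtain ⟨p, hp⟩ := exists_walk_of_edist_ne_top (h.trans_lt (ENat.natCast_lt_top _)).ne
  cases p with
  | nil => exact Or.inl rfl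
  | cons hadj p =>
    refine Or.inr ⟨_, hadj, (edist_le p).trans ?_⟩
    rw [← hp, Walk.length_cons] at h
    have : p.length + 1 ≤ r + 1 := by exact_mod_cast h
    exact_mod_cast Nat.le_of_succ_le_succ this

theorem reachable_fromRel {r : V → V → Prop} {a b : V} (h : r a b) :
    (fromRel r).Reachable a b := by
  by_cases hab : a = b
  · exact hab ▸ Reachable.refl a
  · exact ((fromRel_adj r a b).2 ⟨hab, Or.inl h⟩).reachable

theorem Reachable.exists_walk_length_lt_card [Finite V] {u v : V} (h : G.Reachable u v) :
    ∃ p : G.Walk u v, p.length < Nat.card V := by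
  classical
  have := Fintype.ofFinite V
  obtain ⟨p⟩ := h
  exact ⟨p.bypass, Nat.card_eq_fintype_card (α := V) ▸ p.bypass_isPath.length_lt⟩

theorem closedBall_finite_and_ncard_le {d : ℕ} (hfin : ∀ v, (G.neighborSet v).Finite)
    (hdeg : ∀ v, (G.neighborSet v).ncard ≤ d) (r : ℕ) (x : V) :
    {y | G.edist x y ≤ r}.Finite ∧ {y | G.edist x y ≤ r}.ncard ≤ (d + 1) ^ r := by
  induction r generalizing x with
  | zero => simp
  | succ r ih =>
    let N := (hfin x).toFinset
    have hsub :
        {y | G.edist x y ≤ ↑(r + 1)} ⊆ insert x (⋃ z ∈ N, {y | G.edist z y ≤ r}) := by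
      intro y hy
      rcases eq_or_exists_adj_of_edist_le_succ hy with rfl | ⟨z, hz, hzy⟩
      · exact Set.mem_insert _ _
      · exact Set.mem_insert_of_mem _ (Set.mem_iUnion₂.2 ⟨z, by simpa [N] using hz, hzy⟩)
    have hfinU : (⋃ z ∈ N, {y | G.edist z y ≤ r}).Finite :=
      N.finite_toSet.biUnion fun z _ => (ih z).1
    refine ⟨(hfinU.insert x).subset hsub, ?_⟩
    calc {y | G.edist x y ≤ ↑(r + 1)}.ncard
        ≤ (insert x (⋃ z ∈ N, {y | G.edist z y ≤ r})).ncard :=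
          Set.ncard_le_ncard hsub (hfinU.insert x)
      _ ≤ (⋃ z ∈ N, {y | G.edist z y ≤ r}).ncard + 1 := Set.ncard_insert_le _ _
      _ ≤ (∑ z ∈ N, {y | G.edist z y ≤ r}.ncard) + 1 := by
          gcongr; exact N.set_ncard_biUnion_le _
      _ ≤ N.card * (d + 1) ^ r + 1 := by
          gcongr; exact Finset.sum_le_card_nsmul _ _ _ fun z _ => (ih z).2
      _ ≤ d * (d + 1) ^ r + 1 := by
          gcongr; rw [← Set.ncard_eq_toFinset_card _ (hfin x)]; exact hdeg x
      _ ≤ (d + 1) ^ (r + 1) := by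
          rw [pow_succ]; nlinarith [Nat.one_le_pow r (d + 1) (Nat.succ_pos d)]

theorem colorable_of_ncard_neighborSet_le {D : ℕ} (hfin : ∀ v, (G.neighborSet v).Finite)
    (hD : ∀ v, (G.neighborSet v).ncard ≤ D) : G.Colorable (D + 1) := by
  classical
  let lt : V → V → Prop := WellOrderingRel
  -- Greedy colouring along a well-order: the at most `D` smaller neighbours of `v` leave a
  -- colour free for `v`.
  have key : ∀ v (g : ∀ u, lt u v → Fin (D + 1)),
      ∃ c, ∀ u (h : lt u v), G.Adj v u → g u h ≠ c := by
    intro v g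
    let used : Finset (Fin (D + 1)) :=
      (hfin v).toFinset.image fun u => if h : lt u v then g u h else 0
    have hused : used.card < (Finset.univ : Finset (Fin (D + 1))).card :=
      calc used.card ≤ (hfin v).toFinset.card := Finset.card_image_le
        _ = (G.neighborSet v).ncard := (Set.ncard_eq_toFinset_card _ _).symm
        _ < Finset.univ.card := by simpa using Nat.lt_succ_of_le (hD v)
    obtain ⟨c, -, hc⟩ := Finset.exists_mem_notMem_of_card_lt_card hused
    exact ⟨c, fun u h hadj hu =>
      hc (Finset.mem_image.2 ⟨u, by simpa using hadj, by simp [h, hu]⟩)⟩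
  let col : V → Fin (D + 1) := WellOrderingRel.isWellOrder.wf.fix fun v g => (key v g).choose
  have hcol : ∀ u v, lt u v → G.Adj v u → col u ≠ col v := by
    intro u v h hadj
    have hfix : col v = (key v fun u _ => col u).choose :=
      WellOrderingRel.isWellOrder.wf.fix_eq _ v
    rw [hfix]
    exact (key v fun u _ => col u).choose_spec u h hadj
  refine ⟨Coloring.mk col fun {x y} hxy => ?_⟩
  rcases trichotomous_of lt x y with h | rfl | h
  · exact hcol x y h hxy.symm
  · exact (hxy.ne rfl).elim
  · exact (hcol y x h hxy).symm

theorem exists_isDistanceColoring {d : ℕ} (hfin : ∀ v, (G.neighborSet v).Finite)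
    (hdeg : ∀ v, (G.neighborSet v).ncard ≤ d) (r : ℕ) :
    ∃ col : V → Fin ((d + 1) ^ r + 1), G.IsDistanceColoring r col := by
  let H : SimpleGraph V := SimpleGraph.fromRel fun x y => G.edist x y ≤ r
  have hsub : ∀ v, H.neighborSet v ⊆ {y | G.edist v y ≤ r} := by
    intro v y hy
    rcases (fromRel_adj (fun x y => G.edist x y ≤ r) v y).1 hy with ⟨-, h | h⟩
    · exact h
    · rw [Set.mem_ofPred_eq, edist_comm]
      exact h
  obtain ⟨c⟩ := colorable_of_ncard_neighborSet_le (G := H)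
    (fun v => (closedBall_finite_and_ncard_le hfin hdeg r v).1.subset (hsub v))
    (fun v => (Set.ncard_le_ncard (hsub v) (closedBall_finite_and_ncard_le hfin hdeg r v).1).trans
      (closedBall_finite_and_ncard_le hfin hdeg r v).2)
  refine ⟨c, fun x y hxy hc => ?_⟩
  by_contra hne
  exact c.valid ((SimpleGraph.fromRel_adj _ _ _).2 ⟨hne, Or.inl hxy⟩) hc

end SimpleGraph

namespace BDDFC

variable {σ : Sig}

def atomsAt (C : Str σ) (a : C.Dom) : Set (σ.Rel × C.Dom × C.Dom) :=
  {p | C.rel p.1 p.2.1 p.2.2 ∧ (p.2.1 = a ∨ p.2.2 = a)}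

def gaifman (C : Str σ) : SimpleGraph C.Dom := SimpleGraph.fromRel (edge C)

section Gaifman

variable {C : Str σ}

theorem gaifman_edist_le_one {R : σ.Rel} {a b : C.Dom} (h : C.rel R a b) :
    (gaifman C).edist a b ≤ 1 := by
  rw [SimpleGraph.edist_le_one_iff_adj_or_eq]
  by_cases hab : a = b
  · exact Or.inr hab
  · exact Or.inl ((SimpleGraph.fromRel_adj _ _ _).2 ⟨hab, Or.inl ⟨R, h⟩⟩)

open Classical in
theorem neighborSet_gaifman_subset (a : C.Dom) :
    (gaifman C).neighborSet a ⊆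
      (fun p : σ.Rel × C.Dom × C.Dom => if p.2.1 = a then p.2.2 else p.2.1) '' atomsAt C a := by
  intro b hb
  obtain ⟨hne, ⟨R, h⟩ | ⟨R, h⟩⟩ := (SimpleGraph.fromRel_adj _ _ _).1 hb
  · exact ⟨(R, a, b), ⟨h, Or.inl rfl⟩, if_pos rfl⟩
  · exact ⟨(R, b, a), ⟨h, Or.inr rfl⟩, if_neg (Ne.symm hne)⟩

theorem neighborSet_gaifman_finite (hfin : ∀ a, (atomsAt C a).Finite) (a : C.Dom) :
    ((gaifman C).neighborSet a).Finite :=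
  ((hfin a).image _).subset (neighborSet_gaifman_subset a)

theorem ncard_neighborSet_gaifman_le {d : ℕ} (hfin : ∀ a, (atomsAt C a).Finite)
    (hdeg : ∀ a, (atomsAt C a).ncard ≤ d) (a : C.Dom) :
    ((gaifman C).neighborSet a).ncard ≤ d :=
  ((Set.ncard_le_ncard (neighborSet_gaifman_subset a) ((hfin a).image _)).trans
    (Set.ncard_image_le (hfin a))).trans (hdeg a)

end Gaifman

def Tm.equivSum (σ : Sig) (k : ℕ) : Tm σ k ≃ Fin k ⊕ Unit ⊕ σ.Const where
  toFun
    | .var i => .inl i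
    | .y => .inr (.inl ())
    | .const c => .inr (.inr c)
  invFun
    | .inl i => .var i
    | .inr (.inl ()) => .y
    | .inr (.inr c) => .const c
  left_inv t := by cases t <;> rfl
  right_inv s := by rcases s with _ | _ | _ <;> rfl

instance {k : ℕ} : Nonempty (Tm σ k) := ⟨.y⟩

instance {k : ℕ} [Finite σ.Const] : Finite (Tm σ k) := .of_equiv _ (Tm.equivSum σ k).symm

theorem Tm.card_eq {k : ℕ} [Finite σ.Const] :
    Nat.card (Tm σ k) = k + 1 + Nat.card σ.Const := by
  rw [Nat.card_congr (Tm.equivSum σ k), Nat.card_sum, Nat.card_sum]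
  simp [add_assoc]

def Atom.mapTm {k k' : ℕ} (f : Tm σ k → Tm σ k') : Atom σ k → Atom σ k'
  | .rel R s t => .rel R (f s) (f t)
  | .un U s => .un U (f s)
  | .eq s t => .eq (f s) (f t)

theorem sat_map_mapTm {A : Str σ} {k k' : ℕ} {f : Tm σ k → Tm σ k'} {v : Fin k → A.Dom}
    {v' : Fin k' → A.Dom} {e e' : A.Dom} (hf : ∀ t, tmVal A v' e' (f t) = tmVal A v e t)
    (q : CQ σ k) : sat A v' e' (q.map (Atom.mapTm f)) ↔ sat A v e q := by
  have hatom : ∀ α : Atom σ k, satAtom A v' e' (α.mapTm f) ↔ satAtom A v e α := by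
    intro α
    cases α <;> simp only [Atom.mapTm, satAtom, hf]
  simp only [sat, List.forall_mem_map, hatom]

def Tm.yAsLast {k : ℕ} : Tm σ k → Tm σ (k + 1)
  | .var i => .var i.castSucc
  | .y => .var (Fin.last k)
  | .const c => .const c

def Tm.varAsLast {k : ℕ} : Tm σ 1 → Tm σ (k + 1)
  | .var _ => .var (Fin.last k)
  | .y => .y
  | .const c => .const c

/-- `∃ x, ℓ(y, x) ∧ q(x)`, with `x` the last variable. -/
def linkQuery {k : ℕ} (ℓ : CQ σ 1) (q : CQ σ k) : CQ σ (k + 1) :=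
  ℓ.map (Atom.mapTm Tm.varAsLast) ++ q.map (Atom.mapTm Tm.yAsLast)

section Link

variable {A : Str σ} {ℓ : CQ σ 1}

theorem sat_linkQuery {k : ℕ} {w : Fin (k + 1) → A.Dom} {e : A.Dom} {q : CQ σ k} :
    sat A w e (linkQuery ℓ q) ↔
      sat A (fun _ => w (Fin.last k)) e ℓ ∧ sat A (Fin.init w) (w (Fin.last k)) q := by
  simp only [linkQuery, sat, List.forall_mem_append]
  exact and_congr (sat_map_mapTm (by rintro (_ | _ | _) <;> rfl) ℓ)
    (sat_map_mapTm (by rintro (_ | _ | _) <;> rfl) q)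

theorem exists_sat_linkQuery_iff {a b : A.Dom} (hu : {x | sat A (fun _ => x) a ℓ}.Subsingleton)
    (hb : sat A (fun _ => b) a ℓ) {k : ℕ} (q : CQ σ k) :
    (∃ w, sat A w a (linkQuery ℓ q)) ↔ ∃ w, sat A w b q := by
  simp only [sat_linkQuery]
  constructor
  · rintro ⟨w, hℓ, hq⟩
    exact ⟨Fin.init w, hu hℓ hb ▸ hq⟩
  · rintro ⟨w, hq⟩
    exact ⟨Fin.snoc w b, by simpa using hb, by simpa using hq⟩

end Link

namespace equivPtp

variable {A : Str σ} {n s : ℕ} {a b c : A.Dom}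

theorem mono (h : s ≤ n) (he : equivPtp A n a b) : equivPtp A s a b :=
  fun k hk q => he k (hk.trans_le h) q

theorem trans (h₁ : equivPtp A n a b) (h₂ : equivPtp A n b c) : equivPtp A n a c :=
  fun k hk q => (h₁ k hk q).trans (h₂ k hk q)

theorem satAtom_iff (h : equivPtp A n a b) (hn : 0 < n) (α : Atom σ 0) :
    satAtom A Fin.elim0 a α ↔ satAtom A Fin.elim0 b α := by
  have hsingle : ∀ x, (∃ v, sat A v x [α]) ↔ satAtom A Fin.elim0 x α := fun x =>
    ⟨fun ⟨v, hv⟩ => Subsingleton.elim v Fin.elim0 ▸ hv α (List.mem_singleton_self α),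
      fun hx => ⟨Fin.elim0, by simpa [sat] using hx⟩⟩
  rw [← hsingle, ← hsingle]
  exact h 0 hn [α]

theorem un_iff (h : equivPtp A n a b) (hn : 0 < n) (u : σ.Un) : A.un u a ↔ A.un u b :=
  h.satAtom_iff hn (.un u .y)

theorem eq_const (h : equivPtp A n a b) (hn : 0 < n) {c : σ.Const} (hb : b = A.const c) :
    a = A.const c :=
  (h.satAtom_iff hn (.eq .y (.const c))).2 hb

theorem col_eq {C : Str σ} {K : Type} {col : C.Dom → K} {a b : C.Dom}
    (h : equivPtp (colored C col) n a b) (hn : 0 < n) : col a = col b :=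
  (h.un_iff hn (.inr (col b))).2 rfl

theorem exists_link {ℓ : CQ σ 1} {a a' b' : A.Dom} (h : equivPtp A (s + 2) a a')
    (hu : {x | sat A (fun _ => x) a ℓ}.Subsingleton)
    (hu' : {x | sat A (fun _ => x) a' ℓ}.Subsingleton) (hb' : sat A (fun _ => b') a' ℓ) :
    ∃ b, sat A (fun _ => b) a ℓ ∧ equivPtp A (s + 1) b b' := by
  obtain ⟨v, hv⟩ := (h 1 (by omega) ℓ).2 ⟨_, hb'⟩
  have hv0 : sat A (fun _ => v 0) a ℓ := by
    convert hv using 2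
    exact congrArg v (Subsingleton.elim _ _)
  refine ⟨v 0, hv0, fun k hk q => ?_⟩
  -- `q` holds at the unique `ℓ`-neighbour iff `linkQuery ℓ q` holds at the base point.
  rw [← exists_sat_linkQuery_iff hu hv0, ← exists_sat_linkQuery_iff hu' hb']
  exact h (k + 1) (by omega) _

end equivPtp

theorem IsHom.sat {A B : Str σ} {f : A.Dom → B.Dom} (hf : IsHom A B f) {k : ℕ}
    {v : Fin k → A.Dom} {e : A.Dom} {q : CQ σ k} (h : sat A v e q) :
    sat B (f ∘ v) (f e) q := by
  have hval : ∀ t, tmVal B (f ∘ v) (f e) t = f (tmVal A v e t) := by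
    rintro (_ | _ | c)
    · rfl
    · rfl
    · exact (hf.2.2 c).symm
  intro α hα
  have hα := h α hα
  cases α <;> simp only [satAtom, hval] at hα ⊢
  · exact hf.1 _ _ _ hα
  · exact hf.2.1 _ _ hα
  · rw [hα]

theorem isHom_qmap (C : Str σ) {K : Type} (col : C.Dom → K) (n : ℕ) :
    IsHom C (reduct (Mq (colored C col) n)) (qmap (colored C col) n) :=
  ⟨fun _ a b h => ⟨a, b, rfl, rfl, h⟩, fun _ a h => ⟨a, rfl, h⟩, fun _ => rfl⟩

section Colored

variable {C : Str σ} {K : Type} {col : C.Dom → K}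

def outLink (R : σ.Rel) (κ : K) : CQ (colorSig σ K) 1 :=
  [.rel R .y (.var 0), .un (.inr κ) (.var 0)]

def inLink (R : σ.Rel) (κ : K) : CQ (colorSig σ K) 1 :=
  [.rel R (.var 0) .y, .un (.inr κ) (.var 0)]

theorem sat_outLink {R : σ.Rel} {κ : K} {a b : C.Dom} :
    sat (colored C col) (fun _ => b) a (outLink R κ) ↔ C.rel R a b ∧ col b = κ := by
  simp [outLink, sat, satAtom, tmVal, colored]

theorem sat_inLink {R : σ.Rel} {κ : K} {a b : C.Dom} :
    sat (colored C col) (fun _ => b) a (inLink R κ) ↔ C.rel R b a ∧ col b = κ := by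
  simp [inLink, sat, satAtom, tmVal, colored]

theorem subsingleton_outLink (hcol : (gaifman C).IsDistanceColoring 2 col) (R : σ.Rel) (κ : K)
    (a : C.Dom) : {b | sat (colored C col) (fun _ => b) a (outLink R κ)}.Subsingleton :=
  hcol.subsingleton fun _ hb =>
    have hb := sat_outLink.1 hb
    ⟨gaifman_edist_le_one hb.1, hb.2⟩

theorem subsingleton_inLink (hcol : (gaifman C).IsDistanceColoring 2 col) (R : σ.Rel) (κ : K)
    (a : C.Dom) : {b | sat (colored C col) (fun _ => b) a (inLink R κ)}.Subsingleton :=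
  hcol.subsingleton fun _ hb =>
    have hb := sat_inLink.1 hb
    ⟨SimpleGraph.edist_comm.trans_le (gaifman_edist_le_one hb.1), hb.2⟩

def Approx (C : Str σ) (col : C.Dom → K) (n s : ℕ) (x : C.Dom)
    (X : (Mq (colored C col) n).Dom) : Prop :=
  ∀ a, qmap (colored C col) n a = X → equivPtp (colored C col) s x a

section Approx

variable {n s : ℕ} {x y : C.Dom} {X : (Mq (colored C col) n).Dom}

theorem Approx.mono {s' : ℕ} (h : s ≤ s') (hx : Approx C col n s' x X) : Approx C col n s x X :=
  fun a ha => (hx a ha).mono h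

theorem approx_qmap_of_equivPtp {b : C.Dom} (hs : s ≤ n) (h : equivPtp (colored C col) s x b) :
    Approx C col n s x (qmap (colored C col) n b) :=
  fun _ ha => h.trans ((Quotient.exact ha.symm : equivPtp _ n _ _).mono hs)

theorem approx_qmap (hs : s ≤ n) : Approx C col n s x (qmap (colored C col) n x) :=
  approx_qmap_of_equivPtp hs fun _ _ _ => Iff.rfl

theorem Approx.eq {r : ℕ} (hcol : (gaifman C).IsDistanceColoring r col) (hs : 0 < s)
    (hx : Approx C col n s x X) (hy : Approx C col n s y X) (hxy : (gaifman C).edist x y ≤ r) :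
    x = y := by
  induction X using Quotient.inductionOn with
  | h a => exact hcol hxy (((hx a rfl).col_eq hs).trans ((hy a rfl).col_eq hs).symm)

theorem Approx.exists_link {ℓ : CQ (colorSig σ K) 1}
    (hu : ∀ z, {b | sat (colored C col) (fun _ => b) z ℓ}.Subsingleton) (hs : s + 1 ≤ n)
    {a' b' : C.Dom} (hx : Approx C col n (s + 2) x (qmap (colored C col) n a'))
    (hb' : sat (colored C col) (fun _ => b') a' ℓ) :
    ∃ y, sat (colored C col) (fun _ => y) x ℓ ∧
      Approx C col n (s + 1) y (qmap (colored C col) n b') :=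
  let ⟨y, hy, he⟩ := (hx a' rfl).exists_link (hu x) (hu a') hb'
  ⟨y, hy, approx_qmap_of_equivPtp hs he⟩

theorem Approx.exists_rel_right (hcol : (gaifman C).IsDistanceColoring 2 col) (hs : s + 1 ≤ n)
    {R : σ.Rel} {Y : (Mq (colored C col) n).Dom} (hx : Approx C col n (s + 2) x X)
    (hXY : (Mq (colored C col) n).rel R X Y) :
    ∃ y, C.rel R x y ∧ Approx C col n (s + 1) y Y := by
  obtain ⟨a', b', rfl, rfl, hab⟩ := hXY
  obtain ⟨y, hy, hY⟩ := hx.exists_link (subsingleton_outLink hcol R (col b')) hs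
    (sat_outLink.2 ⟨hab, rfl⟩)
  exact ⟨y, (sat_outLink.1 hy).1, hY⟩

theorem Approx.exists_rel_left (hcol : (gaifman C).IsDistanceColoring 2 col) (hs : s + 1 ≤ n)
    {R : σ.Rel} {Y : (Mq (colored C col) n).Dom} (hx : Approx C col n (s + 2) x X)
    (hYX : (Mq (colored C col) n).rel R Y X) :
    ∃ y, C.rel R y x ∧ Approx C col n (s + 1) y Y := by
  obtain ⟨b', a', rfl, rfl, hab⟩ := hYX
  obtain ⟨y, hy, hY⟩ := hx.exists_link (subsingleton_inLink hcol R (col b')) hs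
    (sat_inLink.2 ⟨hab, rfl⟩)
  exact ⟨y, (sat_inLink.1 hy).1, hY⟩

end Approx

end Colored

def queryGraph {k : ℕ} (q : CQ σ k) : SimpleGraph (Tm σ k) :=
  SimpleGraph.fromRel fun t t' => (∃ R, Atom.rel R t t' ∈ q) ∨ Atom.eq t t' ∈ q

section Lift

variable {k : ℕ} {C : Str σ} {K : Type} (col : C.Dom → K) (n : ℕ)
  (V : Fin k → (Mq (colored C col) n).Dom) (e : C.Dom) (q : CQ σ k)

abbrev qval : Tm σ k → (Mq (colored C col) n).Dom :=
  tmVal (reduct (Mq (colored C col) n)) V (qmap (colored C col) n e)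

noncomputable def basePoint (c : (queryGraph q).ConnectedComponent) : Tm σ k × C.Dom :=
  open Classical in
  if c = (queryGraph q).connectedComponentMk .y then (.y, e)
  else (c.out, (qval col n V e c.out).out)

noncomputable def lift (L : ℕ) (t : Tm σ k) : C.Dom :=
  @Classical.epsilon _ ⟨e⟩ fun x =>
    (gaifman C).edist (basePoint col n V e q ((queryGraph q).connectedComponentMk t)).2 x ≤ L ∧
      Approx C col n 2 x (qval col n V e t)

variable {col n V e q}

theorem basePoint_reachable (t : Tm σ k) :
    (queryGraph q).Reachable
      (basePoint col n V e q ((queryGraph q).connectedComponentMk t)).1 t := by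
  unfold basePoint
  split_ifs with h
  · exact SimpleGraph.ConnectedComponent.exact h.symm
  · exact SimpleGraph.ConnectedComponent.exact (Quot.out_eq _)

theorem qmap_basePoint (c : (queryGraph q).ConnectedComponent) :
    qmap (colored C col) n (basePoint col n V e q c).2 =
      qval col n V e (basePoint col n V e q c).1 := by
  unfold basePoint
  split_ifs
  · rfl
  · exact Quotient.out_eq _

theorem basePoint_y : basePoint col n V e q ((queryGraph q).connectedComponentMk .y) = (.y, e) :=
  if_pos rfl

theorem exists_approx_of_adj (hcol : (gaifman C).IsDistanceColoring 2 col)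
    (hsat : sat (reduct (Mq (colored C col) n)) V (qmap (colored C col) n e) q) {t t' : Tm σ k}
    (hadj : (queryGraph q).Adj t t') {s : ℕ} (hs : s + 1 ≤ n) {x : C.Dom}
    (hx : Approx C col n (s + 2) x (qval col n V e t)) :
    ∃ y, (gaifman C).edist x y ≤ 1 ∧ Approx C col n (s + 1) y (qval col n V e t') := by
  obtain ⟨-, (⟨R, h⟩ | h) | (⟨R, h⟩ | h)⟩ := (SimpleGraph.fromRel_adj _ _ _).1 hadj
  · obtain ⟨y, hy, hY⟩ := hx.exists_rel_right hcol hs (hsat _ h)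
    exact ⟨y, gaifman_edist_le_one hy, hY⟩
  · have heq : qval col n V e t = qval col n V e t' := hsat _ h
    exact ⟨x, by simp, heq ▸ hx.mono (by omega)⟩
  · obtain ⟨y, hy, hY⟩ := hx.exists_rel_left hcol hs (hsat _ h)
    exact ⟨y, SimpleGraph.edist_comm.trans_le (gaifman_edist_le_one hy), hY⟩
  · have heq : qval col n V e t' = qval col n V e t := hsat _ h
    exact ⟨x, by simp, heq ▸ hx.mono (by omega)⟩

theorem exists_approx_of_walk (hcol : (gaifman C).IsDistanceColoring 2 col)
    (hsat : sat (reduct (Mq (colored C col) n)) V (qmap (colored C col) n e) q) {t₀ t : Tm σ k}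
    (p : (queryGraph q).Walk t₀ t) {s : ℕ} (hs : s + 1 + p.length ≤ n) {x₀ : C.Dom}
    (hx₀ : Approx C col n (s + 1 + p.length) x₀ (qval col n V e t₀)) :
    ∃ x, (gaifman C).edist x₀ x ≤ p.length ∧
      Approx C col n (s + 1) x (qval col n V e t) := by
  induction p generalizing x₀ with
  | nil => exact ⟨x₀, by simp, hx₀⟩
  | cons hadj p ih =>
    rw [SimpleGraph.Walk.length_cons] at hs hx₀
    obtain ⟨x₁, h₁, hx₁⟩ :=
      exists_approx_of_adj hcol hsat hadj (s := s + p.length) (by omega) (hx₀.mono (by omega))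
    obtain ⟨x, h, hx⟩ := ih (by omega) (hx₁.mono (by omega))
    refine ⟨x, (SimpleGraph.edist_le_add_of_le h₁ h).trans ?_, hx⟩
    rw [SimpleGraph.Walk.length_cons, add_comm]

theorem lift_spec [Finite σ.Const] (hcol : (gaifman C).IsDistanceColoring 2 col)
    (hsat : sat (reduct (Mq (colored C col) n)) V (qmap (colored C col) n e) q) {L : ℕ}
    (hL : Nat.card (Tm σ k) ≤ L) (hn : L + 2 ≤ n) (t : Tm σ k) :
    (gaifman C).edist (basePoint col n V e q ((queryGraph q).connectedComponentMk t)).2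
        (lift col n V e q L t) ≤ L ∧
      Approx C col n 2 (lift col n V e q L t) (qval col n V e t) := by
  refine Classical.epsilon_spec (p := fun x => (gaifman C).edist _ x ≤ L ∧
    Approx C col n 2 x (qval col n V e t)) ?_
  obtain ⟨p, hp⟩ := (basePoint_reachable t).exists_walk_length_lt_card
  obtain ⟨x, hx, hA⟩ := exists_approx_of_walk hcol hsat p (s := 1) (by omega)
    (qmap_basePoint _ ▸ approx_qmap (by omega))
  exact ⟨x, hx.trans (by exact_mod_cast (hp.trans_le hL).le), hA⟩

theorem edist_lift_le [Finite σ.Const] (hcol : (gaifman C).IsDistanceColoring 2 col)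
    (hsat : sat (reduct (Mq (colored C col) n)) V (qmap (colored C col) n e) q) {L : ℕ}
    (hL : Nat.card (Tm σ k) ≤ L) (hn : L + 2 ≤ n) {t t' : Tm σ k}
    (h : (queryGraph q).Reachable t t') :
    (gaifman C).edist (lift col n V e q L t) (lift col n V e q L t') ≤ ↑(L + L) :=
  SimpleGraph.edist_le_add_of_le
    (SimpleGraph.edist_comm.trans_le (lift_spec hcol hsat hL hn t).1)
    (SimpleGraph.ConnectedComponent.sound h ▸ (lift_spec hcol hsat hL hn t').1)

theorem tmVal_lift [Finite σ.Const] {L : ℕ}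
    (hcol : (gaifman C).IsDistanceColoring (2 * L + 1) col)
    (hsat : sat (reduct (Mq (colored C col) n)) V (qmap (colored C col) n e) q)
    (hL : Nat.card (Tm σ k) ≤ L) (hn : L + 2 ≤ n) (t : Tm σ k) :
    tmVal C (fun i => lift col n V e q L (.var i)) e t = lift col n V e q L t := by
  have hL₀ : 0 < L := Nat.card_pos.trans_le hL
  have spec := lift_spec (hcol.mono (by omega)) hsat hL hn
  rcases t with i | _ | c
  · rfl
  · have he := (spec .y).1
    rw [basePoint_y] at he
    exact (approx_qmap (by omega)).eq hcol one_pos ((spec .y).2.mono one_le_two)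
      (he.trans (by exact_mod_cast (by omega : L ≤ 2 * L + 1)))
  · exact (((spec _).2 (C.const c) rfl).eq_const two_pos rfl).symm

theorem exists_sat_of_sat_mq [Finite σ.Const] {L : ℕ}
    (hcol : (gaifman C).IsDistanceColoring (2 * L + 1) col) (hk : k + 1 + Nat.card σ.Const ≤ L)
    (hn : L + 2 ≤ n) (hsat : sat (reduct (Mq (colored C col) n)) V (qmap (colored C col) n e) q) :
    ∃ w, sat C w e q := by
  have hL := Tm.card_eq.trans_le hk
  have hcol₂ := hcol.mono (by omega : 2 ≤ 2 * L + 1)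
  have spec := lift_spec hcol₂ hsat hL hn
  have hval := tmVal_lift hcol hsat hL hn
  refine ⟨fun i => lift col n V e q L (.var i), fun α hα => ?_⟩
  have hα' := hsat α hα
  cases α with
  | rel R t t' =>
    obtain ⟨y, hy, hY⟩ := (spec t).2.exists_rel_right hcol₂ (s := 0) (by omega) hα'
    have hnear :=
      edist_lift_le hcol₂ hsat hL hn (SimpleGraph.reachable_fromRel (Or.inl ⟨R, hα⟩))
    have hyw : y = lift col n V e q L t' := hY.eq hcol one_pos ((spec t').2.mono one_le_two) <|
      (SimpleGraph.edist_le_add_of_le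
        (SimpleGraph.edist_comm.trans_le (gaifman_edist_le_one hy)) hnear).trans
        (by exact_mod_cast (by omega : 1 + (L + L) ≤ 2 * L + 1))
    show C.rel R (tmVal C _ e t) (tmVal C _ e t')
    rw [hval, hval, ← hyw]
    exact hy
  | un U t =>
    obtain ⟨a, ha, hU⟩ := hα'
    show C.un U (tmVal C _ e t)
    rw [hval]
    exact (((spec t).2 a ha).un_iff two_pos (.inl U)).2 hU
  | eq t t' =>
    have heq : qval col n V e t = qval col n V e t' := hα'
    have hnear :=
      edist_lift_le hcol₂ hsat hL hn (SimpleGraph.reachable_fromRel (Or.inr hα))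
    show tmVal C _ e t = tmVal C _ e t'
    rw [hval, hval]
    exact (heq ▸ (spec t).2).eq hcol two_pos (spec t').2
      (hnear.trans (by exact_mod_cast (by omega : L + L ≤ 2 * L + 1)))

end Lift

end BDDFC

open BDDFC

theorem stmt_19_general {σ : Sig} [Finite σ.Const]
    (C : Str σ) (d : ℕ)
    (hdeg : ∀ a : C.Dom,
      ({p : σ.Rel × C.Dom × C.Dom |
          C.rel p.1 p.2.1 p.2.2 ∧ (p.2.1 = a ∨ p.2.2 = a)}).Finite ∧
      ({p : σ.Rel × C.Dom × C.Dom |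
          C.rel p.1 p.2.1 p.2.2 ∧ (p.2.1 = a ∨ p.2.2 = a)}).ncard ≤ d)
    (m : ℕ) :
    ∃ (n : ℕ) (K : Type) (_ : Finite K) (col : C.Dom → K),
      conservative C col n m := by
  set L := m + Nat.card σ.Const
  obtain ⟨col, hcol⟩ := (gaifman C).exists_isDistanceColoring
    (neighborSet_gaifman_finite fun a => (hdeg a).1)
    (ncard_neighborSet_gaifman_le (fun a => (hdeg a).1) fun a => (hdeg a).2) (2 * L + 1)
  refine ⟨L + 2, _, inferInstance, col, fun e k hk q => ⟨?_, ?_⟩⟩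
  · rintro ⟨v, hv⟩
    exact ⟨_, (isHom_qmap C col _).sat hv⟩
  · rintro ⟨V, hV⟩
    exact exists_sat_of_sat_mq hcol (by omega) le_rfl hV

/-- every binary structure of bounded degree (a uniform bound on
the number of atoms any element participates in) is ptp-conservative. -/
theorem stmt_19 {σ : Sig} [Finite σ.Rel] [Finite σ.Un] [Finite σ.Const]
    (C : Str σ) (d : ℕ)
    (hdeg : ∀ a : C.Dom,
      ({p : σ.Rel × C.Dom × C.Dom |
          C.rel p.1 p.2.1 p.2.2 ∧ (p.2.1 = a ∨ p.2.2 = a)}).Finite ∧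
      ({p : σ.Rel × C.Dom × C.Dom |
          C.rel p.1 p.2.1 p.2.2 ∧ (p.2.1 = a ∨ p.2.2 = a)}).ncard ≤ d)
    (m : ℕ) :
    ∃ (n : ℕ) (K : Type) (_ : Finite K) (col : C.Dom → K),
      conservative C col n m :=
  stmt_19_general C d hdeg m
end
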